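/- Let η ∈ ℂ with |η| ≤ 1. Then for every θ = (θ₁, θ₂) ∈ ℝ², |a(η) + b(η)cos θ₁ + b(η)cos θ₂ + c(η)cos θ₁ cos θ₂| ≤ 23/15. Consequently, for h > 0, λ ∈ ℂ with |λh²| ≤ 1, and ω ∈ ℝ, the supremum over θ ∈ ℝ² of |ω·λ·M̃(θ)|, where M̃(θ) = h²(a(λh²) + b(λh²)cos θ₁ + b(λh²)cos θ₂ + c(λh²)cos θ₁ cos θ₂), is at most (23/15)·|ω|·|λ|·h². -/

import Mathlib

noncomputable def aη (η : ℂ) : ℂ := (1/4) * (1/(2+η) + 2/(4+η) + 1/(6+η))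
noncomputable def bη (η : ℂ) : ℂ := (1/4) * (1/(2+η) - 1/(6+η))
noncomputable def cη (η : ℂ) : ℂ := (1/4) * (1/(2+η) - 2/(4+η) + 1/(6+η))

/-- Symbol of the additive element-wise Vanka smoother. -/
noncomputable def Msym (h : ℝ) (lam : ℂ) (θ : ℝ × ℝ) : ℂ :=
  (h:ℂ)^2 * (aη (lam * (h:ℂ)^2) + bη (lam * (h:ℂ)^2) * Real.cos θ.1
    + bη (lam * (h:ℂ)^2) * Real.cos θ.2
    + cη (lam * (h:ℂ)^2) * (Real.cos θ.1 * Real.cos θ.2))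

/-!
Regrouping the symbol by the three poles gives
`(1+x)(1+y) / (4(2+η)) + (1-xy) / (2(4+η)) + (1-x)(1-y) / (4(6+η))` with `x = cos θ₁`,
`y = cos θ₂`. For `‖x‖, ‖y‖, ‖η‖ ≤ 1` the numerators are at most `4, 2, 4` and the
denominators at least `4, 6, 20`, so the symbol is at most `1 + 1/3 + 1/5 = 23/15`.
-/

lemma vanka_symbol_eq (η x y : ℂ) :
    aη η + bη η * x + bη η * y + cη η * (x * y)
      = (1 + x) * (1 + y) / (4 * (2 + η)) + (1 - x * y) / (2 * (4 + η))
        + (1 - x) * (1 - y) / (4 * (6 + η)) := by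
  simp only [aη, bη, cη, div_eq_mul_inv, mul_inv]
  ring

lemma norm_div_le_div_of_le {𝕜 : Type*} [NormedDivisionRing 𝕜] {a w : 𝕜} {A B : ℝ}
    (ha : ‖a‖ ≤ A) (hB : 0 < B) (hw : B ≤ ‖w‖) : ‖a / w‖ ≤ A / B :=
  norm_div a w ▸ div_le_div₀ ((norm_nonneg a).trans ha) ha hB hw

lemma norm_vanka_symbol_le {η x y : ℂ} (hη : ‖η‖ ≤ 1) (hx : ‖x‖ ≤ 1) (hy : ‖y‖ ≤ 1) :
    ‖aη η + bη η * x + bη η * y + cη η * (x * y)‖ ≤ 23/15 := by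
  have hden (k z : ℂ) : ‖k‖ * (‖z‖ - 1) ≤ ‖k * (z + η)‖ := by
    rw [norm_mul]
    gcongr
    linarith [norm_sub_le_norm_add z η]
  have hprod {u v : ℂ} (hu : ‖u‖ ≤ 2) (hv : ‖v‖ ≤ 2) : ‖u * v‖ ≤ 4 := by
    rw [norm_mul]
    nlinarith [norm_nonneg u, norm_nonneg v]
  have hadd (z : ℂ) (hz : ‖z‖ ≤ 1) : ‖1 + z‖ ≤ 2 := by
    linarith [norm_add_le 1 z, norm_one (α := ℂ)]
  have hsub (z : ℂ) (hz : ‖z‖ ≤ 1) : ‖1 - z‖ ≤ 2 := by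
    linarith [norm_sub_le 1 z, norm_one (α := ℂ)]
  have hxy : ‖x * y‖ ≤ 1 := norm_mul x y ▸ mul_le_one₀ hx (norm_nonneg y) hy
  have h₁ : ‖(1 + x) * (1 + y) / (4 * (2 + η))‖ ≤ 4 / 4 :=
    norm_div_le_div_of_le (hprod (hadd x hx) (hadd y hy)) (by norm_num)
      ((hden 4 2).trans' (by norm_num))
  have h₂ : ‖(1 - x * y) / (2 * (4 + η))‖ ≤ 2 / 6 :=
    norm_div_le_div_of_le (hsub _ hxy) (by norm_num) ((hden 2 4).trans' (by norm_num))
  have h₃ : ‖(1 - x) * (1 - y) / (4 * (6 + η))‖ ≤ 4 / 20 :=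
    norm_div_le_div_of_le (hprod (hsub x hx) (hsub y hy)) (by norm_num)
      ((hden 4 6).trans' (by norm_num))
  rw [vanka_symbol_eq]
  exact norm_add₃_le.trans (by linarith)

lemma norm_cos_le_one (t : ℝ) : ‖(Real.cos t : ℂ)‖ ≤ 1 := by
  rw [Complex.norm_real, Real.norm_eq_abs]
  exact Real.abs_cos_le_one t

lemma norm_Msym_le {h : ℝ} {lam : ℂ} (hlam : ‖lam * (h:ℂ)^2‖ ≤ 1) (θ : ℝ × ℝ) :
    ‖Msym h lam θ‖ ≤ 23/15 * h^2 := by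
  rw [Msym, norm_mul, norm_pow, Complex.norm_real, Real.norm_eq_abs, sq_abs, mul_comm _ (h^2)]
  gcongr
  exact norm_vanka_symbol_le hlam (norm_cos_le_one θ.1) (norm_cos_le_one θ.2)

theorem stmt_11 :
    (∀ η : ℂ, ‖η‖ ≤ 1 → ∀ θ : ℝ × ℝ,
      ‖aη η + bη η * Real.cos θ.1 + bη η * Real.cos θ.2
        + cη η * (Real.cos θ.1 * Real.cos θ.2)‖ ≤ 23/15) ∧
    (∀ (h : ℝ), 0 < h → ∀ lam : ℂ, ‖lam * (h:ℂ)^2‖ ≤ 1 → ∀ ω : ℝ,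
      ∀ θ : ℝ × ℝ,
        ‖(ω:ℂ) * lam * Msym h lam θ‖ ≤
          (23/15) * |ω| * ‖lam‖ * h^2) := by
  refine ⟨fun η hη θ => norm_vanka_symbol_le hη (norm_cos_le_one θ.1) (norm_cos_le_one θ.2), ?_⟩
  intro h _ lam hlam ω θ
  calc ‖(ω:ℂ) * lam * Msym h lam θ‖ = |ω| * ‖lam‖ * ‖Msym h lam θ‖ := by
        rw [norm_mul, norm_mul, Complex.norm_real, Real.norm_eq_abs]
    _ ≤ |ω| * ‖lam‖ * (23/15 * h^2) := by gcongr; exact norm_Msym_le hlam θ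
    _ = 23/15 * |ω| * ‖lam‖ * h^2 := by ring
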